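/- arXiv:1112.5448 — 8 statements merged into one kernel-verified Lean document; each statement's English description precedes it below -/
import Mathlib

section
/- For every real y > 0, the inequality e^y / (e^y - y - 1) ≤ 1 + 6/y² holds; equivalently e^y/φ(y) ≤ 1 + 6/y² where φ(y) = e^y − y − 1. -/
theorem exp_div_phi_le (y : ℝ) (hy : 0 < y) :
    Real.exp y / (Real.exp y - y - 1) ≤ 1 + 6 / y ^ 2 := by
  have hcubic : 1 + y + y ^ 2 / 2 + y ^ 3 / 6 ≤ Real.exp y := by
    have := Real.sum_le_exp_of_nonneg hy.le 4
    simp [Finset.sum_range_succ, Nat.factorial] at this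
    linarith
  have hphi : 0 < Real.exp y - y - 1 := by
    have h := Real.add_one_lt_exp (ne_of_gt hy)
    linarith
  rw [div_le_iff₀ hphi]
  have hy2 : (0:ℝ) < y ^ 2 := by positivity
  have h6 : 6 / y ^ 2 * (y ^ 2) = 6 := by field_simp
  have key : y ^ 2 * (y + 1) ≤ 6 * (Real.exp y - y - 1) := by nlinarith
  have : (1 + 6 / y ^ 2) * (Real.exp y - y - 1) - Real.exp y
      = (6 * (Real.exp y - y - 1) - y ^ 2 * (y + 1)) / y ^ 2 := by
    field_simp; ring
  nlinarith [div_nonneg (by linarith : (0:ℝ) ≤ 6 * (Real.exp y - y - 1) - y ^ 2 * (y + 1)) hy2.le]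
end

section
/- The function u ↦ (e^u − u − 1)/u² is monotone increasing on ℝ (extended by the value 1/2 at u = 0). -/
/-! By Taylor's formula with integral remainder, `e^u = 1 + u + u² ∫₀¹ (1 - t) e^{t u} dt`, so the
function is `u ↦ ∫₀¹ (1 - t) e^{t u} dt` (also at `u = 0`), an integral of functions of `u` that are
increasing for `0 ≤ t ≤ 1`. -/

open Real intervalIntegral

lemma continuous_one_sub_mul_exp_mul (u : ℝ) : Continuous fun t : ℝ => (1 - t) * exp (t * u) := by
  fun_prop

lemma integral_one_sub_mul_exp_mul_of_ne_zero {u : ℝ} (hu : u ≠ 0) :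
    ∫ t in (0 : ℝ)..1, (1 - t) * exp (t * u) = (exp u - u - 1) / u ^ 2 := by
  have hderiv : ∀ t ∈ Set.uIcc (0 : ℝ) 1,
      HasDerivAt (fun t => exp (t * u) * ((1 / u + 1 / u ^ 2) - t / u))
        ((1 - t) * exp (t * u)) t := by
    intro t _
    have hexp : HasDerivAt (fun t => exp (t * u)) (exp (t * u) * u) t :=
      ((hasDerivAt_id t).mul_const u).exp.congr_deriv (by simp)
    refine (hexp.mul (((hasDerivAt_id' t).div_const u).const_sub _)).congr_deriv ?_
    field_simp
    ring
  rw [integral_eq_sub_of_hasDerivAt hderiv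
    ((continuous_one_sub_mul_exp_mul u).intervalIntegrable _ _)]
  simp only [zero_mul, exp_zero, one_mul]
  field_simp
  ring

lemma integral_one_sub_mul_exp_mul_zero :
    ∫ t in (0 : ℝ)..1, (1 - t) * exp (t * 0) = 1 / 2 := by
  simp only [mul_zero, exp_zero, mul_one, integral_sub intervalIntegrable_const intervalIntegrable_id,
    integral_const, integral_id]
  norm_num

lemma monotone_integral_one_sub_mul_exp_mul :
    Monotone fun u : ℝ => ∫ t in (0 : ℝ)..1, (1 - t) * exp (t * u) := by
  intro a b hab
  refine integral_mono_on zero_le_one ((continuous_one_sub_mul_exp_mul a).intervalIntegrable _ _)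
    ((continuous_one_sub_mul_exp_mul b).intervalIntegrable _ _) fun t ⟨ht0, ht1⟩ => ?_
  exact mul_le_mul_of_nonneg_left (exp_le_exp.2 (mul_le_mul_of_nonneg_left hab ht0))
    (sub_nonneg.2 ht1)

theorem monotone_phi_div_sq :
    Monotone (fun u : ℝ => if u = 0 then (1 : ℝ) / 2 else (Real.exp u - u - 1) / u ^ 2) := by
  convert monotone_integral_one_sub_mul_exp_mul using 2 with u
  split_ifs with hu
  · rw [hu, integral_one_sub_mul_exp_mul_zero]
  · rw [integral_one_sub_mul_exp_mul_of_ne_zero hu]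
end

section
/- For θ > 0, the function θ ↦ exp((e^θ − θ − 1)σ² − θt) attains its minimum over θ > 0 at θ* = log(1 + t/σ²), and its value there is at most exp(−(t²/2)/(σ² + t/3)). -/
/-!
The exponent `(exp θ - θ - 1) * s - θ * t` is minimised where `s * exp θ = s + t`, i.e. at `log a`
with `a = 1 + t / s`, by the tangent-line bound `a * (θ - log a + 1) ≤ exp θ`. At the minimiser the
exponent equals `-s * h (t / s)` with `h x = (1 + x) * log (1 + x) - x`, and Bernstein's bound
`x ^ 2 / (2 * (1 + x / 3)) ≤ h x` follows by differentiating twice: the second derivative of the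
difference is `1 / (1 + x) - 27 / (x + 3) ^ 3 ≥ 0`, since `(x + 3) ^ 3 ≥ 27 * (1 + x)`.
-/

open Real Set

lemma monotoneOn_Ici_of_hasDerivAt_nonneg {f f' : ℝ → ℝ} {a : ℝ}
    (hf : ∀ x ∈ Ici a, HasDerivAt f (f' x) x) (hf' : ∀ x ∈ Ici a, 0 ≤ f' x) :
    MonotoneOn f (Ici a) :=
  monotoneOn_of_hasDerivWithinAt_nonneg (convex_Ici a)
    (fun x hx ↦ (hf x hx).continuousAt.continuousWithinAt)
    (fun x hx ↦ (hf x (interior_subset hx)).hasDerivWithinAt)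
    (fun x hx ↦ hf' x (interior_subset hx))

lemma three_mul_mul_add_six_div_le_log_one_add {x : ℝ} (hx : 0 ≤ x) :
    3 * x * (x + 6) / (2 * (x + 3) ^ 2) ≤ log (1 + x) := by
  let p : ℝ → ℝ := fun y ↦ log (1 + y) - 3 * y * (y + 6) / (2 * (y + 3) ^ 2)
  have hderiv : ∀ y ∈ Ici (0 : ℝ), HasDerivAt p (1 / (1 + y) - 27 / (y + 3) ^ 3) y := by
    intro y (hy : 0 ≤ y)
    have h := (((hasDerivAt_id' y).const_add 1).log (by simp; linarith)).sub
      ((((hasDerivAt_id' y).const_mul 3).fun_mul ((hasDerivAt_id' y).add_const 6)).fun_div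
        ((((hasDerivAt_id' y).add_const 3).fun_pow 2).const_mul 2) (by positivity))
    refine h.congr_deriv ?_
    field_simp
    ring
  have hmono := monotoneOn_Ici_of_hasDerivAt_nonneg hderiv fun y (hy : 0 ≤ y) ↦ by
    rw [sub_nonneg, div_le_div_iff₀ (by positivity) (by positivity)]
    nlinarith [pow_pos (by linarith : (0:ℝ) < y + 3) 3, sq_nonneg y, mul_nonneg hy (sq_nonneg y)]
  simpa [p] using hmono self_mem_Ici (mem_Ici.mpr hx) hx

lemma sq_div_le_one_add_mul_log_one_add_sub {x : ℝ} (hx : 0 ≤ x) :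
    x ^ 2 / (2 * (1 + x / 3)) ≤ (1 + x) * log (1 + x) - x := by
  let g : ℝ → ℝ := fun y ↦ (1 + y) * log (1 + y) - y - 3 * y ^ 2 / (2 * (y + 3))
  have hderiv : ∀ y ∈ Ici (0 : ℝ),
      HasDerivAt g (log (1 + y) - 3 * y * (y + 6) / (2 * (y + 3) ^ 2)) y := by
    intro y (hy : 0 ≤ y)
    have h1 := (hasDerivAt_id' y).const_add 1
    have h := ((h1.fun_mul (h1.log (by simp; linarith))).sub (hasDerivAt_id' y)).sub
      ((((hasDerivAt_id' y).fun_pow 2).const_mul 3).fun_div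
        (((hasDerivAt_id' y).add_const 3).const_mul 2) (by positivity))
    refine h.congr_deriv ?_
    field_simp
    ring
  have hmono := monotoneOn_Ici_of_hasDerivAt_nonneg hderiv fun y (hy : 0 ≤ y) ↦
    sub_nonneg.mpr (three_mul_mul_add_six_div_le_log_one_add hy)
  have hg : 0 ≤ g x := by simpa [g] using hmono self_mem_Ici (mem_Ici.mpr hx) hx
  have e : x ^ 2 / (2 * (1 + x / 3)) = 3 * x ^ 2 / (2 * (x + 3)) := by
    field_simp; ring
  linarith

lemma mul_add_one_sub_log_le_exp {a : ℝ} (ha : 0 < a) (x : ℝ) :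
    a * (x - log a + 1) ≤ exp x := by
  calc a * (x - log a + 1) ≤ a * exp (x - log a) :=
        mul_le_mul_of_nonneg_left (add_one_le_exp _) ha.le
    _ = exp x := by rw [exp_sub, exp_log ha, mul_div_cancel₀ _ ha.ne']

lemma isMinOn_exp_sub_sub_one_mul_sub_mul {s t : ℝ} (hs : 0 < s) (hst : 0 < s + t) :
    IsMinOn (fun θ ↦ (exp θ - θ - 1) * s - θ * t) univ (log (1 + t / s)) := by
  have hA : 0 < 1 + t / s := by rw [one_add_div hs.ne']; positivity
  have hsA : s * (1 + t / s) = s + t := by field_simp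
  intro θ _
  have htangent := mul_add_one_sub_log_le_exp hA θ
  simp only [mem_ofPred_eq, exp_log hA]
  linear_combination s * htangent + (log (1 + t / s) - θ) * hsA

lemma exp_sub_sub_one_mul_sub_mul_at_log_one_add_div_le {s t : ℝ} (hs : 0 < s) (ht : 0 ≤ t) :
    (exp (log (1 + t / s)) - log (1 + t / s) - 1) * s - log (1 + t / s) * t
      ≤ -(t ^ 2 / 2) / (s + t / 3) := by
  obtain ⟨x, hx, rfl⟩ : ∃ x, 0 ≤ x ∧ t = s * x := ⟨t / s, by positivity, by field_simp⟩
  rw [mul_div_cancel_left₀ x hs.ne', exp_log (by linarith)]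
  have hbern := mul_le_mul_of_nonneg_left (sq_div_le_one_add_mul_log_one_add_sub hx) hs.le
  have e : -((s * x) ^ 2 / 2) / (s + s * x / 3) = -(s * (x ^ 2 / (2 * (1 + x / 3)))) := by
    field_simp
  rw [e]
  linarith

theorem mgf_min_bound (σ t : ℝ) (hσ : 0 < σ) (ht : 0 < t) :
    IsMinOn (fun θ : ℝ => Real.exp ((Real.exp θ - θ - 1) * σ ^ 2 - θ * t))
      (Set.Ioi (0 : ℝ)) (Real.log (1 + t / σ ^ 2)) ∧
    Real.exp ((Real.exp (Real.log (1 + t / σ ^ 2)) - Real.log (1 + t / σ ^ 2) - 1) * σ ^ 2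
        - Real.log (1 + t / σ ^ 2) * t)
      ≤ Real.exp (-(t ^ 2 / 2) / (σ ^ 2 + t / 3)) := by
  have hs : 0 < σ ^ 2 := by positivity
  refine ⟨?_, exp_le_exp.mpr (exp_sub_sub_one_mul_sub_mul_at_log_one_add_div_le hs ht.le)⟩
  have hmin := isMinOn_exp_sub_sub_one_mul_sub_mul hs (by positivity : 0 < σ ^ 2 + t)
  exact (hmin.comp_mono exp_monotone).on_subset (subset_univ _)
end

section
/- Let X be a d×d self-adjoint random matrix with 𝔼X = 0 and ‖X‖ ≤ 1 almost surely (operator norm). Then for every θ > 0, 𝔼 e^{θX} ⪯ I_d + φ(θ)·𝔼X², where φ(θ) = e^θ − θ − 1 and ⪯ is the Loewner order. -/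
open Matrix MeasureTheory NormedSpace
open scoped ComplexOrder

noncomputable def opNorm {d : ℕ} (A : Matrix (Fin d) (Fin d) ℂ) : ℝ :=
  ‖Matrix.toEuclideanCLM (𝕜 := ℂ) A‖

/-!
Comparing power series term by term, `(θx)ᵏ ≤ θᵏx²` for `k ≥ 2` and `|x| ≤ 1`, gives the scalar
bound `e^{θx} ≤ 1 + θx + φ(θ)x²` on `[-1, 1]`. Monotonicity of the continuous functional calculus
turns it into the order inequality `exp (θ • a) ≤ 1 + θ • a + φ(θ) • a²` for every self-adjoint
`a` of norm at most `1` in a C⋆-algebra. With the ℓ² operator norm (which is `opNorm`) square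
complex matrices form a C⋆-algebra whose order is the Loewner order, and the entrywise
expectations are Bochner integrals there; integrating the inequality and using `𝔼X = 0` removes
the linear term.
-/

open scoped Nat

namespace Real

lemma hasSum_pow_div_factorial_add_two (t : ℝ) :
    HasSum (fun n : ℕ => t ^ (n + 2) / (n + 2)!) (exp t - 1 - t) := by
  have h := (hasSum_nat_add_iff' 2).mpr (NormedSpace.expSeries_div_hasSum_exp t)
  simpa [Finset.sum_range_succ, ← Real.exp_eq_exp_ℝ, sub_sub] using h

lemma exp_mul_le_of_abs_le_one {θ x : ℝ} (hθ : 0 ≤ θ) (hx : |x| ≤ 1) :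
    exp (θ * x) ≤ 1 + θ * x + (exp θ - θ - 1) * x ^ 2 := by
  have hterm (n : ℕ) : (θ * x) ^ (n + 2) / (n + 2)! ≤ θ ^ (n + 2) / (n + 2)! * x ^ 2 := by
    have hxn : x ^ n ≤ 1 := (le_abs_self _).trans (abs_pow x n ▸ pow_le_one₀ (abs_nonneg x) hx)
    rw [mul_pow, pow_add x, div_mul_eq_mul_div]
    gcongr
    exact mul_le_of_le_one_left (sq_nonneg x) hxn
  have := hasSum_le hterm (hasSum_pow_div_factorial_add_two (θ * x))
    ((hasSum_pow_div_factorial_add_two θ).mul_right (x ^ 2))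
  linarith

end Real

section CStarAlgebra

variable {A : Type*} [CStarAlgebra A]

lemma spectrum.abs_le_norm_of_mem {a : A} {x : ℝ} (hx : x ∈ spectrum ℝ a) : |x| ≤ ‖a‖ := by
  rcases subsingleton_or_nontrivial A with _ | _
  · simp [spectrum.of_subsingleton] at hx
  exact spectrum.norm_le_norm_of_mem hx

lemma IsSelfAdjoint.norm_exp_le {a : A} (ha : IsSelfAdjoint a) :
    ‖NormedSpace.exp a‖ ≤ Real.exp ‖a‖ := by
  rw [← CFC.real_exp_eq_normedSpace_exp]
  refine norm_cfc_le (Real.exp_pos _).le fun x hx => ?_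
  rw [Real.norm_eq_abs, abs_of_pos (Real.exp_pos x)]
  exact Real.exp_le_exp.2 ((le_abs_self x).trans (spectrum.abs_le_norm_of_mem hx))

lemma IsSelfAdjoint.exp_smul_le [PartialOrder A] [StarOrderedRing A] {a : A}
    (ha : IsSelfAdjoint a) (ha1 : ‖a‖ ≤ 1) {θ : ℝ} (hθ : 0 ≤ θ) :
    NormedSpace.exp (θ • a) ≤ 1 + θ • a + (Real.exp θ - θ - 1) • a ^ 2 := by
  calc NormedSpace.exp (θ • a) = cfc (fun x => Real.exp (θ * x)) a := by
        rw [← CFC.real_exp_eq_normedSpace_exp, ← cfc_comp_smul θ Real.exp a]; rfl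
    _ ≤ cfc (fun x => 1 + θ * x + (Real.exp θ - θ - 1) * x ^ 2) a :=
        cfc_mono (fun x hx => Real.exp_mul_le_of_abs_le_one hθ
          ((spectrum.abs_le_norm_of_mem hx).trans ha1))
    _ = 1 + θ • a + (Real.exp θ - θ - 1) • a ^ 2 := by
        rw [cfc_add a (fun x => 1 + θ * x) (fun x => (Real.exp θ - θ - 1) * x ^ 2),
          cfc_add a (fun _ => 1) (θ * ·), cfc_const_one ℝ a,
          cfc_const_mul_id θ a, cfc_const_mul _ (· ^ 2) a, cfc_pow_id a 2]

end CStarAlgebra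

section RandomElement

variable {Ω A : Type*} [MeasurableSpace Ω] {μ : Measure Ω} {X : Ω → A}

lemma integrable_sq_of_norm_le_one [NormedRing A] [IsFiniteMeasure μ]
    (hX : AEStronglyMeasurable X μ) (hbound : ∀ᵐ ω ∂μ, ‖X ω‖ ≤ 1) :
    Integrable (fun ω => X ω ^ 2) μ :=
  .of_bound ((continuous_pow 2).comp_aestronglyMeasurable hX) 1 <| hbound.mono fun _ h =>
    (norm_pow_le' _ two_pos).trans (pow_le_one₀ (norm_nonneg _) h)

variable [CStarAlgebra A]

lemma integrable_exp_smul_of_norm_le_one [IsFiniteMeasure μ] (hX : AEStronglyMeasurable X μ)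
    (hsa : ∀ᵐ ω ∂μ, IsSelfAdjoint (X ω)) (hbound : ∀ᵐ ω ∂μ, ‖X ω‖ ≤ 1) (θ : ℝ) :
    Integrable (fun ω => NormedSpace.exp (θ • X ω)) μ := by
  have hexp : Continuous (NormedSpace.exp : A → A) :=
    continuous_iff_continuousAt.2 fun a => (exp_analytic (𝕂 := ℂ) a).continuousAt
  refine .of_bound (hexp.comp_aestronglyMeasurable (hX.const_smul θ)) (Real.exp |θ|) ?_
  filter_upwards [hsa, hbound] with ω hsa hbound
  refine ((IsSelfAdjoint.all θ).smul hsa).norm_exp_le.trans ?_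
  rw [Real.exp_le_exp, norm_smul, Real.norm_eq_abs]
  exact mul_le_of_le_one_right (abs_nonneg θ) hbound

theorem integral_exp_smul_le [PartialOrder A] [StarOrderedRing A] [IsProbabilityMeasure μ]
    (hX : AEStronglyMeasurable X μ) (hsa : ∀ᵐ ω ∂μ, IsSelfAdjoint (X ω))
    (hmean : ∫ ω, X ω ∂μ = 0) (hbound : ∀ᵐ ω ∂μ, ‖X ω‖ ≤ 1) {θ : ℝ} (hθ : 0 ≤ θ) :
    ∫ ω, NormedSpace.exp (θ • X ω) ∂μ ≤ 1 + (Real.exp θ - θ - 1) • ∫ ω, X ω ^ 2 ∂μ := by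
  have hX_int : Integrable X μ := .of_bound hX 1 hbound
  have hsmul_int : Integrable (fun ω => θ • X ω) μ := hX_int.smul θ
  have hlin_int : Integrable (fun ω => 1 + θ • X ω) μ := (integrable_const 1).add hsmul_int
  have hquad_int : Integrable (fun ω => (Real.exp θ - θ - 1) • X ω ^ 2) μ :=
    (integrable_sq_of_norm_le_one hX hbound).smul (Real.exp θ - θ - 1)
  calc ∫ ω, NormedSpace.exp (θ • X ω) ∂μ
      ≤ ∫ ω, (1 + θ • X ω + (Real.exp θ - θ - 1) • X ω ^ 2) ∂μ := by
        refine integral_mono_ae (integrable_exp_smul_of_norm_le_one hX hsa hbound θ)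
          (hlin_int.add hquad_int) ?_
        filter_upwards [hsa, hbound] with ω hsa hbound
        exact hsa.exp_smul_le hbound hθ
    _ = 1 + (Real.exp θ - θ - 1) • ∫ ω, X ω ^ 2 ∂μ := by
        rw [integral_add hlin_int hquad_int, integral_add (integrable_const 1) hsmul_int,
          integral_smul, integral_smul, hmean, integral_const]
        simp

end RandomElement

namespace Matrix

variable {Ω m n 𝕜 : Type*} [MeasurableSpace Ω] [Fintype m] [Fintype n]

lemma stronglyMeasurable_of_measurable_apply [RCLike 𝕜] {X : Ω → Matrix m n 𝕜}
    (hX : ∀ i j, Measurable fun ω => X ω i j) : StronglyMeasurable X := by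
  have : Measurable fun ω => (show m → n → 𝕜 from X ω) :=
    measurable_pi_iff.mpr fun i => measurable_pi_iff.mpr (hX i)
  exact this.stronglyMeasurable

open scoped Norms.L2Operator in
lemma of_integral_apply [DecidableEq n] {μ : Measure Ω} {F : Ω → Matrix m n ℂ}
    (hF : Integrable F μ) : of (fun i j => ∫ ω, F ω i j ∂μ) = ∫ ω, F ω ∂μ := by
  ext i j
  exact (entryLinearMap ℂ ℂ i j).toContinuousLinearMap.integral_comp_comm hF

end Matrix

/-- MGF bound: `𝔼 e^{θX} ⪯ I + φ(θ) 𝔼X²` for a bounded centered self-adjoint random matrix. -/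
theorem mgf_loewner_bound {d : ℕ} {Ω : Type*} [MeasurableSpace Ω]
    (μ : Measure Ω) [IsProbabilityMeasure μ]
    (X : Ω → Matrix (Fin d) (Fin d) ℂ)
    (hherm : ∀ ω, (X ω).IsHermitian)
    (hmeas : ∀ i j, Measurable fun ω => X ω i j)
    (hmean : (Matrix.of fun i j => ∫ ω, X ω i j ∂μ) = 0)
    (hbound : ∀ᵐ ω ∂μ, opNorm (X ω) ≤ 1)
    (θ : ℝ) (hθ : 0 < θ) :
    ((1 : Matrix (Fin d) (Fin d) ℂ)
        + (Real.exp θ - θ - 1) • (Matrix.of fun i j => ∫ ω, (X ω ^ 2) i j ∂μ)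
        - Matrix.of fun i j => ∫ ω, (exp (θ • X ω)) i j ∂μ).PosSemidef := by
  open scoped Matrix.Norms.L2Operator MatrixOrder in
  have hX : AEStronglyMeasurable X μ :=
    (Matrix.stronglyMeasurable_of_measurable_apply hmeas).aestronglyMeasurable
  have hsa : ∀ᵐ ω ∂μ, IsSelfAdjoint (X ω) := ae_of_all _ fun ω => (hherm ω).isSelfAdjoint
  have hbound' : ∀ᵐ ω ∂μ, ‖X ω‖ ≤ 1 := hbound
  rw [Matrix.of_integral_apply (integrable_sq_of_norm_le_one hX hbound'),
    Matrix.of_integral_apply (integrable_exp_smul_of_norm_le_one hX hsa hbound' θ),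
    ← Matrix.nonneg_iff_posSemidef, sub_nonneg]
  refine integral_exp_smul_le hX hsa ?_ hbound' hθ.le
  rwa [← Matrix.of_integral_apply (.of_bound hX 1 hbound')]
end

section
/- Let A be a d×d positive semidefinite Hermitian matrix with ‖A‖ = σ² > 0 and let φ(θ) = e^θ − θ − 1 with θ > 0. Then exp(φ(θ)A) − I ⪯ (A/σ²)·exp(φ(θ)σ²). -/
/-!
For `0 ≤ x ≤ s`, convexity of `t ↦ exp (c * t)` puts `exp (c * x)` below the chord joining
`(0, 1)` and `(s, exp (c * s))`, so `exp (c * x) - 1 ≤ (x / s) * exp (c * s)` for every real `c`.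
The spectrum of a positive element `a` of a C⋆-algebra with `‖a‖ ≤ s` lies in `[0, s]`, so the
continuous functional calculus lifts this to `exp (c • a) - 1 ≤ (s⁻¹ * exp (c * s)) • a`.
Square complex matrices with the `L²` operator norm form such an algebra, ordered by the
Loewner order.
-/

open Matrix ComplexOrder NormedSpace

theorem Real.exp_mul_sub_one_le {c s x : ℝ} (hx : 0 ≤ x) (hxs : x ≤ s) :
    Real.exp (c * x) - 1 ≤ s⁻¹ * Real.exp (c * s) * x := by
  obtain rfl | hs := (hx.trans hxs).eq_or_lt
  · simp [le_antisymm hxs hx]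
  have chord := convexOn_exp.2 (Set.mem_univ 0) (Set.mem_univ (c * s))
    (sub_nonneg.mpr ((div_le_one hs).mpr hxs)) (div_nonneg hx hs.le) (sub_add_cancel 1 (x / s))
  have hcx : x / s * (c * s) = c * x := by field_simp
  simp only [smul_eq_mul, mul_zero, zero_add, Real.exp_zero, mul_one, hcx] at chord
  calc Real.exp (c * x) - 1 ≤ x / s * (Real.exp (c * s) - 1) := by linarith
    _ ≤ x / s * Real.exp (c * s) := by gcongr; linarith
    _ = s⁻¹ * Real.exp (c * s) * x := by ring

section CStarAlgebra

variable {A : Type*} [CStarAlgebra A]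

theorem exp_smul_eq_cfc {a : A} (ha : IsSelfAdjoint a) (c : ℝ) :
    exp (c • a) = cfc (fun x : ℝ => Real.exp (c * x)) a := by
  rw [← CFC.real_exp_eq_normedSpace_exp ((IsSelfAdjoint.all c).smul ha),
    ← cfc_comp_smul c Real.exp a]
  rfl

variable [PartialOrder A] [StarOrderedRing A]

theorem spectrum_subset_Icc_of_nonneg_of_norm_le {a : A} (ha : 0 ≤ a) {s : ℝ} (hs : ‖a‖ ≤ s) :
    spectrum ℝ a ⊆ Set.Icc 0 s := fun x hx =>
  ⟨spectrum_nonneg_of_nonneg ha hx,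
    (le_algebraMap_iff_spectrum_le (.of_nonneg ha)).mp
      ((CStarAlgebra.norm_le_iff_le_algebraMap a ((norm_nonneg a).trans hs) ha).mp hs) x hx⟩

theorem exp_smul_sub_one_le_smul {a : A} (ha : 0 ≤ a) {s : ℝ} (hs : ‖a‖ ≤ s) (c : ℝ) :
    exp (c • a) - 1 ≤ (s⁻¹ * Real.exp (c * s)) • a := by
  have hspec := spectrum_subset_Icc_of_nonneg_of_norm_le ha hs
  rw [exp_smul_eq_cfc (.of_nonneg ha), ← cfc_const_mul_id _ a, ← cfc_one ℝ a, ← cfc_sub ..,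
    ← sub_nonneg, ← cfc_sub ..]
  exact cfc_nonneg fun x hx =>
    sub_nonneg.mpr (Real.exp_mul_sub_one_le (hspec hx).1 (hspec hx).2)

end CStarAlgebra

theorem exp_phi_psd_loewner_bound_general {d : ℕ} (A : Matrix (Fin d) (Fin d) ℂ)
    (hA : A.PosSemidef) (σ : ℝ) (hnorm : opNorm A = σ ^ 2)
    (θ : ℝ) :
    ((((σ ^ 2)⁻¹ * Real.exp ((Real.exp θ - θ - 1) * σ ^ 2)) • A)
      - (exp ((Real.exp θ - θ - 1) • A) - 1)).PosSemidef := by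
  -- `opNorm A` is by definition `‖A‖` in this C⋆-algebra, and `(B - C).PosSemidef` is `C ≤ B`.
  open scoped Matrix.Norms.L2Operator MatrixOrder in
  exact exp_smul_sub_one_le_smul hA.nonneg hnorm.le _

theorem exp_phi_psd_loewner_bound {d : ℕ} (A : Matrix (Fin d) (Fin d) ℂ)
    (hA : A.PosSemidef) (σ : ℝ) (hσ : 0 < σ) (hnorm : opNorm A = σ ^ 2)
    (θ : ℝ) (hθ : 0 < θ) :
    ((((σ ^ 2)⁻¹ * Real.exp ((Real.exp θ - θ - 1) * σ ^ 2)) • A)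
      - (exp ((Real.exp θ - θ - 1) • A) - 1)).PosSemidef :=
  exp_phi_psd_loewner_bound_general A hA σ hnorm θ
end

section
/- Peierls inequality: let f : ℝ → ℝ be convex, A an n×n Hermitian matrix, and {u_1,…,u_n} any orthonormal basis of ℂⁿ. Then ∑_{i=1}^n f(⟨u_i, A u_i⟩) ≤ tr f(A), where f(A) is defined via the spectral functional calculus. -/
open Matrix
open scoped ComplexOrder

/-- Spectral functional calculus for Hermitian matrices (junk value `0` otherwise). -/
noncomputable def matFun {d : ℕ} (f : ℝ → ℝ) (A : Matrix (Fin d) (Fin d) ℂ) :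
    Matrix (Fin d) (Fin d) ℂ :=
  if hA : A.IsHermitian then
    (hA.eigenvectorUnitary : Matrix (Fin d) (Fin d) ℂ) *
      Matrix.diagonal (fun i => (f (hA.eigenvalues i) : ℂ)) *
      (hA.eigenvectorUnitary : Matrix (Fin d) (Fin d) ℂ)ᴴ
  else 0

/-!
Expand each `b i` in an orthonormal eigenbasis `v` of `A`: then `⟪b i, A b i⟫` is the average of
the eigenvalues with weights `‖⟪b i, v j⟫‖²`. These weights form a doubly stochastic matrix (the rows
and columns are unit vectors written in an orthonormal basis), so Jensen's inequality on each row
followed by summing the columns gives `∑ i f ⟪b i, A b i⟫ ≤ ∑ j f (λ j) = tr f(A)`.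
-/

open scoped InnerProductSpace

theorem ConvexOn.sum_map_sum_smul_le {ι 𝕜 E β : Type*} [Fintype ι] [DecidableEq ι] [Field 𝕜]
    [LinearOrder 𝕜] [IsStrictOrderedRing 𝕜] [AddCommGroup E] [Module 𝕜 E] [AddCommGroup β]
    [PartialOrder β] [IsOrderedAddMonoid β] [Module 𝕜 β] [IsStrictOrderedModule 𝕜 β]
    {s : Set E} {f : E → β} (hf : ConvexOn 𝕜 s f) {M : Matrix ι ι 𝕜}
    (hM : M ∈ doublyStochastic 𝕜 ι) {p : ι → E} (hp : ∀ j, p j ∈ s) :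
    ∑ i, f (∑ j, M i j • p j) ≤ ∑ j, f (p j) :=
  calc ∑ i, f (∑ j, M i j • p j)
      ≤ ∑ i, ∑ j, M i j • f (p j) := Finset.sum_le_sum fun i _ =>
        hf.map_sum_le (fun _ _ => nonneg_of_mem_doublyStochastic hM)
          (sum_row_of_mem_doublyStochastic hM i) fun j _ => hp j
    _ = ∑ j, (∑ i, M i j) • f (p j) := by rw [Finset.sum_comm]; simp_rw [Finset.sum_smul]
    _ = ∑ j, f (p j) := by simp [sum_col_of_mem_doublyStochastic hM]

namespace OrthonormalBasis

variable {ι 𝕜 E : Type*} [Fintype ι] [RCLike 𝕜] [NormedAddCommGroup E] [InnerProductSpace 𝕜 E]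

theorem inner_map_self_eq_sum {F : Type*} [FunLike F E E] [LinearMapClass F 𝕜 E E]
    (v : OrthonormalBasis ι 𝕜 E) {T : F} {μ : ι → 𝕜} (hT : ∀ j, T (v j) = μ j • v j) (x : E) :
    ⟪x, T x⟫_𝕜 = ∑ j, μ j * (‖⟪x, v j⟫_𝕜‖ ^ 2 : ℝ) := by
  nth_rw 2 [← v.sum_repr' x]
  simp only [map_sum, map_smul, hT, inner_sum, inner_smul_right]
  refine Finset.sum_congr rfl fun j _ => ?_
  rw [RCLike.ofReal_pow, ← RCLike.mul_conj, inner_conj_symm]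
  ring

theorem norm_inner_sq_mem_doublyStochastic [DecidableEq ι] (b v : OrthonormalBasis ι 𝕜 E) :
    Matrix.of (fun i j => ‖⟪b i, v j⟫_𝕜‖ ^ 2) ∈ doublyStochastic ℝ ι := by
  refine mem_doublyStochastic_iff_sum.2 ⟨fun _ _ => sq_nonneg _, fun i => ?_, fun j => ?_⟩
  · simp [v.sum_sq_norm_inner_left, b.norm_eq_one]
  · simp [b.sum_sq_norm_inner_right, v.norm_eq_one]

end OrthonormalBasis

theorem Matrix.IsHermitian.toEuclideanCLM_eigenvectorBasis {𝕜 ι : Type*} [RCLike 𝕜] [Fintype ι]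
    [DecidableEq ι] {A : Matrix ι ι 𝕜} (hA : A.IsHermitian) (j : ι) :
    toEuclideanCLM (𝕜 := 𝕜) A (hA.eigenvectorBasis j)
      = (hA.eigenvalues j : 𝕜) • hA.eigenvectorBasis j := by
  apply WithLp.ofLp_injective 2
  rw [ofLp_toEuclideanCLM]
  simpa using hA.mulVec_eigenvectorBasis j

theorem trace_matFun {d : ℕ} (f : ℝ → ℝ) {A : Matrix (Fin d) (Fin d) ℂ} (hA : A.IsHermitian) :
    (matFun f A).trace = ∑ i, (f (hA.eigenvalues i) : ℂ) := by
  rw [matFun, dif_pos hA, trace_mul_cycle, ← star_eq_conjTranspose,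
    Unitary.star_mul_self_of_mem hA.eigenvectorUnitary.2, one_mul, trace_diagonal]

/-- Peierls inequality. -/
theorem peierls {n : ℕ} (f : ℝ → ℝ) (hf : ConvexOn ℝ Set.univ f)
    (A : Matrix (Fin n) (Fin n) ℂ) (hA : A.IsHermitian)
    (b : OrthonormalBasis (Fin n) ℂ (EuclideanSpace ℂ (Fin n))) :
    ∑ i, f (inner ℂ (b i) (Matrix.toEuclideanCLM (𝕜 := ℂ) A (b i)) : ℂ).re
      ≤ (matFun f A).trace.re := by
  set v := hA.eigenvectorBasis
  have hdiag : ∀ i, (inner ℂ (b i) (toEuclideanCLM (𝕜 := ℂ) A (b i))).re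
      = ∑ j, ‖⟪b i, v j⟫_ℂ‖ ^ 2 • hA.eigenvalues j := fun i => by
    rw [v.inner_map_self_eq_sum hA.toEuclideanCLM_eigenvectorBasis]
    simp only [RCLike.re_to_complex.symm, ← RCLike.ofReal_mul, ← RCLike.ofReal_sum,
      RCLike.ofReal_re, smul_eq_mul, mul_comm]
  simp only [hdiag, trace_matFun f hA, Complex.re_sum, Complex.ofReal_re]
  exact hf.sum_map_sum_smul_le (b.norm_inner_sq_mem_doublyStochastic v) fun _ => Set.mem_univ _
end

section
/- If f : ℝ → ℝ is convex, then the map A ↦ tr f(A) is convex on the real vector space of n×n Hermitian matrices. -/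
/-!
Peierls' inequality: if `W` is unitary and `M = U D Uᴴ` is Hermitian, then `Wᴴ M W = Q D Qᴴ`
with `Q = Wᴴ U` unitary, so the diagonal of `Wᴴ M W` is the eigenvalue vector of `M` multiplied
by the doubly stochastic matrix `(|Q i j|²)`; Jensen's inequality then gives
`∑ i, f (re (Wᴴ M W) i i) ≤ tr f(M)`. Choosing `W` to diagonalise `C = a • A + b • B`, every eigenvalue
of `C` is the `(a, b)`-combination of the matching diagonal entries of `Wᴴ A W` and `Wᴴ B W`, so
convexity of `f` and Peierls' inequality for `A` and for `B` give
`tr f(C) ≤ a tr f(A) + b tr f(B)`.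
-/

open Matrix
open scoped ComplexOrder

open Finset

namespace Matrix

theorem convex_setOf_isHermitian {n 𝕜 : Type*} [RCLike 𝕜] :
    Convex ℝ {A : Matrix n n 𝕜 | A.IsHermitian} :=
  fun _ hA _ hB a b _ _ _ => (hA.smul (IsSelfAdjoint.all a)).add (hB.smul (IsSelfAdjoint.all b))

variable {n : Type*} [Fintype n] [DecidableEq n]

theorem _root_.ConvexOn.sum_map_mulVec_le_of_mem_doublyStochastic {s : Set ℝ} {f : ℝ → ℝ}
    (hf : ConvexOn ℝ s f) {S : Matrix n n ℝ} (hS : S ∈ doublyStochastic ℝ n) {x : n → ℝ}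
    (hx : ∀ i, x i ∈ s) : ∑ i, f ((S *ᵥ x) i) ≤ ∑ i, f (x i) :=
  calc ∑ i, f ((S *ᵥ x) i)
      ≤ ∑ i, ∑ j, S i j * f (x j) := sum_le_sum fun i _ =>
        hf.map_sum_le (fun j _ => nonneg_of_mem_doublyStochastic hS)
          (sum_row_of_mem_doublyStochastic hS i) (fun j _ => hx j)
    _ = ∑ i, f (x i) := by
        rw [sum_comm]
        simp only [← sum_mul, sum_col_of_mem_doublyStochastic hS, one_mul]

theorem map_normSq_mem_doublyStochastic {U : Matrix n n ℂ} (hU : U ∈ unitaryGroup n ℂ) :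
    U.map Complex.normSq ∈ doublyStochastic ℝ n := by
  have hrow (i : n) : ∑ j, Complex.normSq (U i j) = 1 := by
    have := congr_arg (fun M => (M i i).re) (mem_unitaryGroup_iff.1 hU)
    simpa [mul_apply, Complex.mul_conj, Complex.re_sum] using this
  have hcol (j : n) : ∑ i, Complex.normSq (U i j) = 1 := by
    have := congr_arg (fun M => (M j j).re) ((mem_unitaryGroup_iff').1 hU)
    simpa [mul_apply, ← Complex.normSq_eq_conj_mul_self, Complex.re_sum] using this
  exact mem_doublyStochastic_iff_sum.2 ⟨fun i j => Complex.normSq_nonneg _, hrow, hcol⟩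

theorem re_mul_diagonal_mul_conjTranspose_apply_self (Q : Matrix n n ℂ) (x : n → ℝ) (i : n) :
    ((Q * diagonal (fun j => (x j : ℂ)) * Qᴴ) i i).re = (Q.map Complex.normSq *ᵥ x) i := by
  simp only [mul_apply, diagonal_apply, mul_ite, mul_zero, sum_ite_eq', mem_univ, if_true,
    conjTranspose_apply, mulVec, dotProduct, map_apply, Complex.re_sum]
  refine sum_congr rfl fun j _ => ?_
  rw [mul_right_comm, Complex.star_def, Complex.mul_conj, ← Complex.ofReal_mul, Complex.ofReal_re]

theorem IsHermitian.eigenvalues_eq_re_diag_conj {𝕜 : Type*} [RCLike 𝕜] {A : Matrix n n 𝕜}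
    (hA : A.IsHermitian) (i : n) :
    hA.eigenvalues i =
      RCLike.re (((hA.eigenvectorUnitary : Matrix n n 𝕜)ᴴ * A * hA.eigenvectorUnitary) i i) := by
  have h := hA.conjStarAlgAut_star_eigenvectorUnitary
  rw [Unitary.conjStarAlgAut_apply, Unitary.coe_star, star_star, star_eq_conjTranspose] at h
  simp [h]

theorem IsHermitian.sum_map_re_diag_conj_le {f : ℝ → ℝ} (hf : ConvexOn ℝ Set.univ f)
    {M : Matrix n n ℂ} (hM : M.IsHermitian) (W : unitaryGroup n ℂ) :
    ∑ i, f (((W : Matrix n n ℂ)ᴴ * M * W) i i).re ≤ ∑ i, f (hM.eigenvalues i) := by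
  set Q : unitaryGroup n ℂ := star W * hM.eigenvectorUnitary
  have hconj : (W : Matrix n n ℂ)ᴴ * M * W =
      Q * diagonal (fun j => (hM.eigenvalues j : ℂ)) * (Q : Matrix n n ℂ)ᴴ := by
    conv_lhs => rw [hM.spectral_theorem]
    simp [Q, Unitary.conjStarAlgAut_apply, mul_assoc, star_eq_conjTranspose, conjTranspose_mul,
      Function.comp_def]
  simp_rw [hconj, re_mul_diagonal_mul_conjTranspose_apply_self]
  exact hf.sum_map_mulVec_le_of_mem_doublyStochastic (map_normSq_mem_doublyStochastic Q.2)
    fun _ => trivial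

end Matrix

theorem re_trace_matFun {d : ℕ} (f : ℝ → ℝ) {A : Matrix (Fin d) (Fin d) ℂ} (hA : A.IsHermitian) :
    (matFun f A).trace.re = ∑ i, f (hA.eigenvalues i) := by
  rw [matFun, dif_pos hA, trace_mul_cycle, ← star_eq_conjTranspose, Unitary.coe_star_mul_self,
    one_mul, trace_diagonal, Complex.re_sum]
  simp

theorem convexOn_re_trace_matFun {d : ℕ} {f : ℝ → ℝ} (hf : ConvexOn ℝ Set.univ f) :
    ConvexOn ℝ {A : Matrix (Fin d) (Fin d) ℂ | A.IsHermitian} (fun A => (matFun f A).trace.re) := by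
  refine ⟨convex_setOf_isHermitian, fun A hA B hB a b ha hb hab => ?_⟩
  have hC : (a • A + b • B).IsHermitian := convex_setOf_isHermitian hA hB ha hb hab
  set W := hC.eigenvectorUnitary
  set diagA := fun i => (((W : Matrix (Fin d) (Fin d) ℂ)ᴴ * A * W) i i).re
  set diagB := fun i => (((W : Matrix (Fin d) (Fin d) ℂ)ᴴ * B * W) i i).re
  have heig (i : Fin d) : hC.eigenvalues i = a * diagA i + b * diagB i := by
    simp [hC.eigenvalues_eq_re_diag_conj, W, diagA, diagB, mul_add, add_mul]
  simp only [smul_eq_mul, re_trace_matFun f hA, re_trace_matFun f hB, re_trace_matFun f hC]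
  calc ∑ i, f (hC.eigenvalues i)
      ≤ ∑ i, (a * f (diagA i) + b * f (diagB i)) := by
        simp only [heig]
        exact sum_le_sum fun i _ => hf.2 trivial trivial ha hb hab
    _ = a * ∑ i, f (diagA i) + b * ∑ i, f (diagB i) := by
        rw [sum_add_distrib, mul_sum, mul_sum]
    _ ≤ a * ∑ i, f (hA.eigenvalues i) + b * ∑ i, f (hB.eigenvalues i) :=
        add_le_add (mul_le_mul_of_nonneg_left (hA.sum_map_re_diag_conj_le hf W) ha)
          (mul_le_mul_of_nonneg_left (hB.sum_map_re_diag_conj_le hf W) hb)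

/-- Convexity of $A \mapsto \mathrm{tr} f(A)$ on Hermitian matrices. -/
theorem trace_matFun_convex {n : ℕ} (f : ℝ → ℝ) (hf : ConvexOn ℝ Set.univ f)
    (A B : Matrix (Fin n) (Fin n) ℂ) (hA : A.IsHermitian) (hB : B.IsHermitian) :
    (matFun f ((2 : ℝ)⁻¹ • (A + B))).trace.re
      ≤ ((matFun f A).trace.re + (matFun f B).trace.re) / 2 := by
  have h := (convexOn_re_trace_matFun hf).2 hA hB (show (0 : ℝ) ≤ 2⁻¹ by norm_num)
    (show (0 : ℝ) ≤ 2⁻¹ by norm_num) (by norm_num)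
  rw [smul_add]
  simp only [smul_eq_mul] at h
  linarith
end

section
/- If (EWₙ) is a positive semidefinite d×d matrix whose eigenvalues satisfy λᵢ ≤ C·σ²/iᵖ for some p > 1 and constant C > 0, and p(t) := min(−t, 1), then tr p(−(t/σ²)·EWₙ) ≤ min(d, c·t^{1/p}) for all t > 0, where c depends only on C and p. -/
/-!
The trace is `∑ᵢ min (t λᵢ / σ²) 1 ≤ ∑ᵢ min (a / (i + 1) ^ p) 1` with `a = C t`.
Put `b = a ^ (1 / p)`. Each term is at most `(2 b) ^ p (b + i + 1) ^ (-p)`: the terms with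
`i + 1 ≤ b` are at most `1`, the others at most `(b / (i + 1)) ^ p`. Comparing
`∑ᵢ (b + i + 1) ^ (-p)` with `∫_b^∞ x ^ (-p) dx = b ^ (1 - p) / (p - 1)` bounds the sum by
`2 ^ p b / (p - 1)`, so `c = 2 ^ p C ^ (1 / p) / (p - 1)` works.
-/

open Matrix
open scoped ComplexOrder

open Finset

lemma matFun_eq_cfc {d : ℕ} (f : ℝ → ℝ) {A : Matrix (Fin d) (Fin d) ℂ}
    (hA : A.IsHermitian) : matFun f A = cfc f A := by
  rw [matFun, dif_pos hA, hA.cfc_eq]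
  rfl

lemma re_trace_matFun_smul {d : ℕ} (f : ℝ → ℝ) (r : ℝ) {A : Matrix (Fin d) (Fin d) ℂ}
    (hA : A.IsHermitian) :
    (matFun f (r • A)).trace.re = ∑ i, f (r * hA.eigenvalues i) := by
  have hrA : (r • A).IsHermitian := IsSelfAdjoint.smul (star_trivial r) hA
  have hf : ContinuousOn f ((r • ·) '' spectrum ℝ A) :=
    (A.finite_real_spectrum.image _).continuousOn f
  have hcomp : cfc f (r • A) = cfc (fun x : ℝ => f (r • x)) A :=
    (cfc_comp_smul r f A hf hA).symm
  rw [matFun_eq_cfc f hrA, hcomp, hA.cfc_eq, IsHermitian.cfc,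
    Unitary.conjStarAlgAut_apply, trace_mul_cycle, UnitaryGroup.star_mul_self, one_mul,
    trace_diagonal]
  simp [smul_eq_mul]

lemma sum_rpow_neg_add_le {p b : ℝ} (hp : 1 < p) (hb : 0 < b) (d : ℕ) :
    ∑ i ∈ range d, (b + (i + 1)) ^ (-p) ≤ b ^ (1 - p) / (p - 1) := by
  have hanti : AntitoneOn (fun x : ℝ => x ^ (-p)) (Set.Icc b (b + d)) :=
    (Real.antitoneOn_rpow_Ioi_of_exponent_nonpos (by linarith)).mono
      fun x hx => lt_of_lt_of_le hb hx.1
  have hzero : (0 : ℝ) ∉ Set.uIcc b (b + d) := by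
    rw [Set.uIcc_of_le (by simp)]
    exact fun h => hb.not_ge h.1
  calc ∑ i ∈ range d, (b + (i + 1)) ^ (-p)
      ≤ ∫ x in b..b + d, x ^ (-p) := by exact_mod_cast hanti.sum_le_integral
    _ = (b ^ (1 - p) - (b + d) ^ (1 - p)) / (p - 1) := by
      rw [integral_rpow (Or.inr ⟨by linarith, hzero⟩), show -p + 1 = 1 - p by ring,
        ← neg_sub p 1, div_neg, ← neg_div, neg_sub]
    _ ≤ b ^ (1 - p) / (p - 1) := by
      gcongr
      exact sub_le_self _ (by positivity)

lemma min_div_one_le_two_mul_div {b n : ℝ} (hb : 0 < b) (hn : 0 < n) :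
    min (b / n) 1 ≤ 2 * b / (b + n) := by
  rcases le_total b n with h | h
  · refine (min_le_left _ _).trans ?_
    rw [div_le_div_iff₀ hn (by positivity)]
    nlinarith
  · refine (min_le_right _ _).trans ?_
    rw [le_div_iff₀ (by positivity)]
    linarith

lemma min_div_rpow_one_le {p b n : ℝ} (hp : 0 ≤ p) (hb : 0 < b) (hn : 0 < n) :
    min ((b / n) ^ p) 1 ≤ (2 * b) ^ p * (b + n) ^ (-p) := by
  calc min ((b / n) ^ p) 1 = min (b / n) 1 ^ p := by
        simpa using ((Real.monotoneOn_rpow_Ici_of_exponent_nonneg hp).map_min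
          (Set.mem_Ici.2 (div_pos hb hn).le) (Set.mem_Ici.2 zero_le_one)).symm
    _ ≤ (2 * b / (b + n)) ^ p := by
        gcongr
        exact min_div_one_le_two_mul_div hb hn
    _ = (2 * b) ^ p * (b + n) ^ (-p) := by
        rw [Real.div_rpow (by positivity) (by positivity), Real.rpow_neg (by positivity),
          div_eq_mul_inv]

lemma sum_min_div_rpow_one_le {p a : ℝ} (hp : 1 < p) (ha : 0 < a) (d : ℕ) :
    ∑ i ∈ range d, min (a / ((i : ℝ) + 1) ^ p) 1 ≤ 2 ^ p / (p - 1) * a ^ (1 / p) := by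
  set b := a ^ (1 / p)
  have hb : 0 < b := by positivity
  have hbp : b ^ p = a := by
    rw [← Real.rpow_mul ha.le, one_div_mul_cancel (by positivity), Real.rpow_one]
  calc ∑ i ∈ range d, min (a / ((i : ℝ) + 1) ^ p) 1
      ≤ ∑ i ∈ range d, (2 * b) ^ p * (b + (i + 1)) ^ (-p) := by
        gcongr with i
        rw [← hbp, ← Real.div_rpow hb.le (by positivity)]
        exact min_div_rpow_one_le (by linarith) hb (by positivity)
    _ = (2 * b) ^ p * ∑ i ∈ range d, (b + (i + 1)) ^ (-p) := (mul_sum ..).symm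
    _ ≤ (2 * b) ^ p * (b ^ (1 - p) / (p - 1)) := by
        gcongr
        exact sum_rpow_neg_add_le hp hb d
    _ = 2 ^ p / (p - 1) * (b ^ p * b ^ (1 - p)) := by
        rw [Real.mul_rpow zero_le_two hb.le]
        ring
    _ = 2 ^ p / (p - 1) * b := by rw [← Real.rpow_add hb, add_sub_cancel, Real.rpow_one]

/-- Truncated-trace bound under polynomial eigenvalue decay. -/
theorem trace_truncation_bound (C p : ℝ) (hC : 0 < C) (hp : 1 < p) :
    ∃ c : ℝ, 0 < c ∧
      ∀ (d : ℕ) (σ : ℝ), 0 < σ →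
        ∀ (A : Matrix (Fin d) (Fin d) ℂ) (hA : A.PosSemidef),
          (∀ i : Fin d, hA.1.eigenvalues i ≤ C * σ ^ 2 / ((i : ℝ) + 1) ^ p) →
          ∀ t : ℝ, 0 < t →
            (matFun (fun s => min (-s) 1) (-(t / σ ^ 2) • A)).trace.re
              ≤ min (d : ℝ) (c * t ^ (1 / p)) := by
  refine ⟨2 ^ p / (p - 1) * C ^ (1 / p),
    mul_pos (div_pos (by positivity) (by linarith)) (by positivity), ?_⟩
  intro d σ hσ A hA hdecay t ht
  rw [re_trace_matFun_smul _ _ hA.1]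
  have hterm (i : Fin d) : min (-(-(t / σ ^ 2) * hA.1.eigenvalues i)) 1
      ≤ min (C * t / ((i : ℝ) + 1) ^ p) 1 := by
    gcongr
    calc -(-(t / σ ^ 2) * hA.1.eigenvalues i) = t / σ ^ 2 * hA.1.eigenvalues i := by ring
      _ ≤ t / σ ^ 2 * (C * σ ^ 2 / ((i : ℝ) + 1) ^ p) := by gcongr; exact hdecay i
      _ = C * t / ((i : ℝ) + 1) ^ p := by field_simp
  refine le_min ?_ ?_
  · calc _ ≤ ∑ _i : Fin d, (1 : ℝ) := sum_le_sum fun i _ => min_le_right _ _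
      _ = d := by simp
  · calc _ ≤ ∑ i : Fin d, min (C * t / ((i : ℝ) + 1) ^ p) 1 := sum_le_sum fun i _ => hterm i
      _ = ∑ i ∈ range d, min (C * t / ((i : ℝ) + 1) ^ p) 1 :=
        Fin.sum_univ_eq_sum_range (fun i => min (C * t / ((i : ℝ) + 1) ^ p) 1) d
      _ ≤ 2 ^ p / (p - 1) * (C * t) ^ (1 / p) := sum_min_div_rpow_one_le hp (by positivity) d
      _ = 2 ^ p / (p - 1) * C ^ (1 / p) * t ^ (1 / p) := by
        rw [Real.mul_rpow hC.le ht.le, mul_assoc]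
end
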